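/- Let f_x, f_y, f_z be the spin-2 matrices and A the 5×5 matrix with A_{ij} = (1/√5)(-1)^{i-1} δ_{i+j,6}. Let V, c₀, c₁, c₂ be real constants and let Ψ : ℝ → ℂ⁵ be differentiable and satisfy, for all t, i Ψ'(t) = [(V + c₀ ρ(Ψ(t))) I₅ + c₁ (F_x(Ψ(t)) f_x + F_y(Ψ(t)) f_y + F_z(Ψ(t)) f_z)] Ψ(t) + c₂ A₀₀(Ψ(t)) A conj(Ψ(t)), where ρ(Ψ) = Ψᴴ Ψ, F_α(Ψ) = Ψᴴ f_α Ψ, A₀₀(Ψ) = Ψᵀ A Ψ, and conj denotes componentwise complex conjugation. Then, with ρ₀ = ρ(Ψ(0)), the spin-singlet pair amplitude evolves as A₀₀(Ψ(t)) = exp(−2 i t [V + (c₀ + c₂/5) ρ₀]) · A₀₀(Ψ(0)) for all t. -/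

import Mathlib

open Matrix

/-- The spin-2 matrix `f_x`. -/
noncomputable def fx : Matrix (Fin 5) (Fin 5) ℂ :=
  !![0, 1, 0, 0, 0;
     1, 0, (Real.sqrt 6 : ℂ) / 2, 0, 0;
     0, (Real.sqrt 6 : ℂ) / 2, 0, (Real.sqrt 6 : ℂ) / 2, 0;
     0, 0, (Real.sqrt 6 : ℂ) / 2, 0, 1;
     0, 0, 0, 1, 0]

/-- The spin-2 matrix `f_y`. -/
noncomputable def fy : Matrix (Fin 5) (Fin 5) ℂ :=
  Complex.I •
  !![0, -1, 0, 0, 0;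
     1, 0, -((Real.sqrt 6 : ℂ) / 2), 0, 0;
     0, (Real.sqrt 6 : ℂ) / 2, 0, -((Real.sqrt 6 : ℂ) / 2), 0;
     0, 0, (Real.sqrt 6 : ℂ) / 2, 0, -1;
     0, 0, 0, 1, 0]

/-- The spin-2 matrix `f_z`. -/
noncomputable def fz : Matrix (Fin 5) (Fin 5) ℂ :=
  !![2, 0, 0, 0, 0;
     0, 1, 0, 0, 0;
     0, 0, 0, 0, 0;
     0, 0, 0, -1, 0;
     0, 0, 0, 0, -2]

/-- The matrix `A` with `A_{ij} = (1/√5)(-1)^(i-1) δ_{i+j,6}`. -/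
noncomputable def Amat : Matrix (Fin 5) (Fin 5) ℂ :=
  !![0, 0, 0, 0, (Real.sqrt 5 : ℂ)⁻¹;
     0, 0, 0, -(Real.sqrt 5 : ℂ)⁻¹, 0;
     0, 0, (Real.sqrt 5 : ℂ)⁻¹, 0, 0;
     0, -(Real.sqrt 5 : ℂ)⁻¹, 0, 0, 0;
     (Real.sqrt 5 : ℂ)⁻¹, 0, 0, 0, 0]

/-- Density `ρ(Ψ) = Ψᴴ Ψ`. -/
noncomputable def rho (Ψ : Fin 5 → ℂ) : ℂ := star Ψ ⬝ᵥ Ψ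

/-- Spin expectation `F_α(Ψ) = Ψᴴ f_α Ψ` for a spin matrix `f`. -/
noncomputable def Fsp (f : Matrix (Fin 5) (Fin 5) ℂ) (Ψ : Fin 5 → ℂ) : ℂ :=
  star Ψ ⬝ᵥ (f *ᵥ Ψ)

/-- Spin-singlet pair amplitude `A₀₀(Ψ) = Ψᵀ A Ψ`. -/
noncomputable def A00 (Ψ : Fin 5 → ℂ) : ℂ := Ψ ⬝ᵥ (Amat *ᵥ Ψ)

/-- Right-hand side of the nonlinear subproblem ODE (i.e. `𝓑Ψ`). -/
noncomputable def nonlinearRHS (V c₀ c₁ c₂ : ℝ) (Ψ : Fin 5 → ℂ) : Fin 5 → ℂ :=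
  ((((V : ℂ) + (c₀ : ℂ) * rho Ψ) • (1 : Matrix (Fin 5) (Fin 5) ℂ)
      + (c₁ : ℂ) • (Fsp fx Ψ • fx + Fsp fy Ψ • fy + Fsp fz Ψ • fz)) *ᵥ Ψ)
    + ((c₂ : ℂ) * A00 Ψ) • (Amat *ᵥ star Ψ)

lemma sqrt5_sq : ((Real.sqrt 5 : ℂ))⁻¹ ^ 2 = 1/5 := by
  rw [sq, ← mul_inv]
  norm_cast
  rw [Real.mul_self_sqrt (by norm_num)]
  norm_num

lemma Amat_symm : Amatᵀ = Amat := by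
  ext i j; fin_cases i <;> fin_cases j <;>
    simp [Amat, Matrix.vecHead, Matrix.vecTail]

lemma Amat_herm : Amatᴴ = Amat := by
  ext i j; fin_cases i <;> fin_cases j <;>
    simp [Amat, Matrix.vecHead, Matrix.vecTail]

lemma fx_herm : fxᴴ = fx := by
  ext i j; fin_cases i <;> fin_cases j <;>
    simp [fx, Matrix.vecHead, Matrix.vecTail]

lemma fy_herm : fyᴴ = fy := by
  ext i j; fin_cases i <;> fin_cases j <;>
    simp [fy, Matrix.vecHead, Matrix.vecTail]

lemma fz_herm : fzᴴ = fz := by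
  ext i j; fin_cases i <;> fin_cases j <;>
    simp [fz, Matrix.vecHead, Matrix.vecTail]

lemma quad_Afx (x : Fin 5 → ℂ) : x ⬝ᵥ ((Amat * fx) *ᵥ x) = 0 := by
  simp [Amat, fx, dotProduct, mulVec, mul_apply, Fin.sum_univ_five,
    Matrix.vecHead, Matrix.vecTail]
  ring

lemma quad_Afy (x : Fin 5 → ℂ) : x ⬝ᵥ ((Amat * fy) *ᵥ x) = 0 := by
  simp [Amat, fy, dotProduct, mulVec, mul_apply, Fin.sum_univ_five,
    Matrix.vecHead, Matrix.vecTail, Matrix.smul_apply]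
  ring

lemma quad_Afz (x : Fin 5 → ℂ) : x ⬝ᵥ ((Amat * fz) *ᵥ x) = 0 := by
  simp [Amat, fz, dotProduct, mulVec, mul_apply, Fin.sum_univ_five,
    Matrix.vecHead, Matrix.vecTail]
  ring

lemma AA (y : Fin 5 → ℂ) : Amat *ᵥ (Amat *ᵥ y) = ((5:ℂ)⁻¹) • y := by
  funext i; fin_cases i <;>
    simp [Amat, mulVec, dotProduct, Fin.sum_univ_five,
      Matrix.vecHead, Matrix.vecTail] <;>
    · ring_nf
      rw [sqrt5_sq]
      ring

lemma AA' (y : Fin 5 → ℂ) : (Amat * Amat) *ᵥ y = ((5:ℂ)⁻¹) • y := by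
  rw [← mulVec_mulVec, AA]

lemma star_dot (u v : Fin 5 → ℂ) : star (u ⬝ᵥ v) = star u ⬝ᵥ star v := by
  rw [dotProduct_comm, ← star_dotProduct_star]

lemma star_mulVec' (M : Matrix (Fin 5) (Fin 5) ℂ) (v : Fin 5 → ℂ) :
    star (M *ᵥ v) = Mᴴᵀ *ᵥ star v := by
  rw [star_mulVec, ← transpose_transpose Mᴴ, vecMul_transpose, transpose_transpose]

lemma dot_transpose (M : Matrix (Fin 5) (Fin 5) ℂ) (y x : Fin 5 → ℂ) :
    (Mᵀ *ᵥ y) ⬝ᵥ x = y ⬝ᵥ (M *ᵥ x) := by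
  rw [dotProduct_comm, dotProduct_mulVec, vecMul_transpose, dotProduct_comm]

lemma dot_Amat_symm (a b : Fin 5 → ℂ) : a ⬝ᵥ (Amat *ᵥ b) = b ⬝ᵥ (Amat *ᵥ a) := by
  conv_lhs => rw [← Amat_symm]
  rw [dotProduct_comm, dot_transpose]

lemma rho_real (x : Fin 5 → ℂ) : (starRingEnd ℂ) (rho x) = rho x := by
  simp [rho, dotProduct, Fin.sum_univ_five, mul_comm]

lemma Fsp_real (f : Matrix (Fin 5) (Fin 5) ℂ) (hf : fᴴ = f) (x : Fin 5 → ℂ) :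
    (starRingEnd ℂ) (Fsp f x) = Fsp f x := by
  rw [← Complex.star_def, Fsp, star_dot, star_star, star_mulVec', hf,
    dotProduct_comm, dot_transpose]

lemma A00_star (x : Fin 5 → ℂ) :
    star (A00 x) = star x ⬝ᵥ (Amat *ᵥ star x) := by
  rw [A00, star_dot, star_mulVec', Amat_herm, Amat_symm]

lemma key_A00 (V c₀ c₁ c₂ : ℝ) (x d : Fin 5 → ℂ)
    (hd : d = (-Complex.I) • nonlinearRHS V c₀ c₁ c₂ x) :
    d ⬝ᵥ (Amat *ᵥ x) + x ⬝ᵥ (Amat *ᵥ d)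
      = (-2*Complex.I*((V:ℂ) + ((c₀:ℂ)+(c₂:ℂ)/5) * rho x)) * A00 x := by
  rw [dot_Amat_symm d x, hd, nonlinearRHS]
  simp only [mulVec_smul, mulVec_add, add_mulVec, smul_mulVec, one_mulVec,
    mulVec_mulVec, AA', dotProduct_add, dotProduct_smul, smul_eq_mul]
  rw [quad_Afx, quad_Afy, quad_Afz]
  have hx : x ⬝ᵥ star x = rho x := by rw [rho, dotProduct_comm]
  have hA : x ⬝ᵥ (Amat *ᵥ x) = A00 x := rfl
  rw [hx, hA]
  ring

lemma key_rho_aux (H : Matrix (Fin 5) (Fin 5) ℂ) (hH : Hᴴ = H) (c : ℂ)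
    (x d : Fin 5 → ℂ)
    (hd : d = (-Complex.I) • (H *ᵥ x + c • (Amat *ᵥ star x))) :
    star d ⬝ᵥ x + star x ⬝ᵥ d
      = Complex.I * (star c * A00 x - c * star (A00 x)) := by
  subst hd
  rw [star_smul, star_add, star_smul, star_mulVec', star_mulVec', hH, Amat_herm,
    Amat_symm, star_star]
  simp only [smul_dotProduct, dotProduct_smul, add_dotProduct, dotProduct_add,
    smul_eq_mul, star_neg, Complex.star_def, Complex.conj_I]
  rw [dot_transpose]
  have h1 : (Amat *ᵥ x) ⬝ᵥ x = A00 x := by rw [dotProduct_comm]; rfl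
  have h2 : star x ⬝ᵥ (Amat *ᵥ star x) = (starRingEnd ℂ) (A00 x) := by
    rw [← Complex.star_def, A00_star]
  rw [h1, h2]
  ring

lemma key_rho (V c₀ c₁ c₂ : ℝ) (x d : Fin 5 → ℂ)
    (hd : d = (-Complex.I) • nonlinearRHS V c₀ c₁ c₂ x) :
    star d ⬝ᵥ x + star x ⬝ᵥ d = 0 := by
  have hH : ((((V : ℂ) + (c₀ : ℂ) * rho x) • (1 : Matrix (Fin 5) (Fin 5) ℂ)
      + (c₁ : ℂ) • (Fsp fx x • fx + Fsp fy x • fy + Fsp fz x • fz)))ᴴ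
      = (((V : ℂ) + (c₀ : ℂ) * rho x) • (1 : Matrix (Fin 5) (Fin 5) ℂ)
      + (c₁ : ℂ) • (Fsp fx x • fx + Fsp fy x • fy + Fsp fz x • fz)) := by
    simp only [conjTranspose_add, conjTranspose_smul, conjTranspose_one,
      fx_herm, fy_herm, fz_herm, star_add, star_mul', Complex.star_def,
      Complex.conj_ofReal]
    rw [Fsp_real fx fx_herm, Fsp_real fy fy_herm, Fsp_real fz fz_herm, rho_real]
  rw [key_rho_aux _ hH ((c₂ : ℂ) * A00 x) x d (by rw [hd, nonlinearRHS])]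
  rw [star_mul', Complex.star_def, Complex.conj_ofReal]
  ring

lemma hasDerivAt_dot2 {u v : ℝ → Fin 5 → ℂ} {u' v' : Fin 5 → ℂ} {t : ℝ}
    (hu : HasDerivAt u u' t) (hv : HasDerivAt v v' t) :
    HasDerivAt (fun s => u s ⬝ᵥ v s) (u' ⬝ᵥ v t + u t ⬝ᵥ v') t := by
  have h : ∀ i ∈ Finset.univ, HasDerivAt (fun s => u s i * v s i)
      (u' i * v t i + u t i * v' i) t :=
    fun i _ => (hasDerivAt_pi.1 hu i).mul (hasDerivAt_pi.1 hv i)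
  have h2 := HasDerivAt.fun_sum h
  exact h2.congr_deriv (by simp [dotProduct, Finset.sum_add_distrib])

lemma hasDerivAt_mulVec2 (M : Matrix (Fin 5) (Fin 5) ℂ) {v : ℝ → Fin 5 → ℂ}
    {v' : Fin 5 → ℂ} {t : ℝ} (hv : HasDerivAt v v' t) :
    HasDerivAt (fun s => M *ᵥ v s) (M *ᵥ v') t := by
  rw [hasDerivAt_pi]
  intro i
  have h : ∀ j ∈ Finset.univ, HasDerivAt (fun s => M i j * v s j) (M i j * v' j) t :=
    fun j _ => (hasDerivAt_pi.1 hv j).const_mul (M i j)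
  have h2 := HasDerivAt.fun_sum h
  exact h2

theorem nonlinear_subproblem_A00_evolution (V c₀ c₁ c₂ : ℝ)
    (Ψ : ℝ → Fin 5 → ℂ) (hΨ : Differentiable ℝ Ψ)
    (hode : ∀ t, Complex.I • deriv Ψ t = nonlinearRHS V c₀ c₁ c₂ (Ψ t)) :
    ∀ t : ℝ, A00 (Ψ t) =
      Complex.exp (-2 * Complex.I * (t : ℂ) *
        ((V : ℂ) + ((c₀ : ℂ) + (c₂ : ℂ) / 5) * rho (Ψ 0))) * A00 (Ψ 0) := by
  have hder : ∀ t, deriv Ψ t = (-Complex.I) • nonlinearRHS V c₀ c₁ c₂ (Ψ t) := by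
    intro t
    rw [← hode t, smul_smul]
    simp [Complex.I_mul_I]
  have hΨd : ∀ t, HasDerivAt Ψ (deriv Ψ t) t := fun t => (hΨ t).hasDerivAt
  have hrho : ∀ t, HasDerivAt (fun s => rho (Ψ s)) 0 t := by
    intro t
    have h := hasDerivAt_dot2 ((hΨd t).star) (hΨd t)
    rw [key_rho V c₀ c₁ c₂ (Ψ t) (deriv Ψ t) (hder t)] at h
    exact h
  have hrconst : ∀ t, rho (Ψ t) = rho (Ψ 0) :=
    fun t => is_const_of_deriv_eq_zero (fun s => (hrho s).differentiableAt)
      (fun s => (hrho s).deriv) t 0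
  set μ : ℂ := (V:ℂ) + ((c₀:ℂ)+(c₂:ℂ)/5) * rho (Ψ 0) with hμ
  have hA : ∀ t, HasDerivAt (fun s => A00 (Ψ s)) ((-2*Complex.I*μ) * A00 (Ψ t)) t := by
    intro t
    have h := hasDerivAt_dot2 (hΨd t) (hasDerivAt_mulVec2 Amat (hΨd t))
    rw [key_A00 V c₀ c₁ c₂ (Ψ t) (deriv Ψ t) (hder t), hrconst t] at h
    exact h
  have hg : ∀ t : ℝ, HasDerivAt
      (fun s : ℝ => Complex.exp ((2*Complex.I*μ) * s) * A00 (Ψ s)) 0 t := by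
    intro t
    have h1 : HasDerivAt (fun s : ℝ => ((2*Complex.I*μ) * s : ℂ)) (2*Complex.I*μ) t := by
      simpa using (Complex.ofRealCLM.hasDerivAt (x := t)).const_mul (2*Complex.I*μ)
    have he := h1.cexp
    have h2 := he.mul (hA t)
    exact h2.congr_deriv (by ring)
  intro t
  have h0 := is_const_of_deriv_eq_zero (fun s => (hg s).differentiableAt)
    (fun s => (hg s).deriv) t 0
  simp only [Complex.ofReal_zero, mul_zero, Complex.exp_zero, one_mul] at h0
  calc A00 (Ψ t)
      = Complex.exp (-2*Complex.I*(t:ℂ)*μ)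
        * (Complex.exp ((2*Complex.I*μ)*(t:ℂ)) * A00 (Ψ t)) := by
        rw [← mul_assoc, ← Complex.exp_add,
          show (-2*Complex.I*(t:ℂ)*μ + (2*Complex.I*μ)*(t:ℂ)) = 0 by ring,
          Complex.exp_zero, one_mul]
    _ = Complex.exp (-2*Complex.I*(t:ℂ)*μ) * A00 (Ψ 0) := by rw [h0]
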